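/- Let J₁ : V → W and J₂ : W → U be strong Dirac linear maps with respect to lagrangian subspaces L ⊆ V ⊕ V*, L_W ⊆ W ⊕ W*, L_U ⊆ U ⊕ U*. Then J₂ ∘ J₁ : V → U is a strong Dirac map with respect to L and L_U. -/
import Mathlib


/-- `J` is a strong Dirac (linear) map from `(V,L)` to `(W,L_W)`: the forward
image of `L` equals `L_W`, and `ker J ∩ ker L = 0`. -/
def IsStrongDirac {V W : Type*} [AddCommGroup V] [Module ℝ V] [AddCommGroup W] [Module ℝ W]
    (J : V →ₗ[ℝ] W) (L : Submodule ℝ (V × Module.Dual ℝ V))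
    (LW : Submodule ℝ (W × Module.Dual ℝ W)) : Prop :=
  (∀ q : W × Module.Dual ℝ W,
      q ∈ LW ↔ ∃ (X : V) (β : Module.Dual ℝ W), q = (J X, β) ∧ (X, J.dualMap β) ∈ L) ∧
  (∀ X : V, J X = 0 → (X, (0 : Module.Dual ℝ V)) ∈ L → X = 0)

/-- The composition of strong Dirac maps is a strong Dirac map. -/
theorem strong_dirac_comp {V W U : Type*}
    [AddCommGroup V] [Module ℝ V] [FiniteDimensional ℝ V]
    [AddCommGroup W] [Module ℝ W] [FiniteDimensional ℝ W]
    [AddCommGroup U] [Module ℝ U] [FiniteDimensional ℝ U]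
    (J₁ : V →ₗ[ℝ] W) (J₂ : W →ₗ[ℝ] U)
    (L : Submodule ℝ (V × Module.Dual ℝ V))
    (LW : Submodule ℝ (W × Module.Dual ℝ W))
    (LU : Submodule ℝ (U × Module.Dual ℝ U))
    (hL : ∀ x : V × Module.Dual ℝ V, x ∈ L ↔ ∀ y ∈ L, y.2 x.1 + x.2 y.1 = 0)
    (hLW : ∀ x : W × Module.Dual ℝ W, x ∈ LW ↔ ∀ y ∈ LW, y.2 x.1 + x.2 y.1 = 0)
    (hLU : ∀ x : U × Module.Dual ℝ U, x ∈ LU ↔ ∀ y ∈ LU, y.2 x.1 + x.2 y.1 = 0)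
    (h₁ : IsStrongDirac J₁ L LW) (h₂ : IsStrongDirac J₂ LW LU) :
    IsStrongDirac (J₂ ∘ₗ J₁) L LU := by
  obtain ⟨h₁f, h₁k⟩ := h₁
  obtain ⟨h₂f, h₂k⟩ := h₂
  constructor
  · intro q
    constructor
    · intro hq
      obtain ⟨Y, γ, hq, hYγ⟩ := (h₂f q).mp hq
      obtain ⟨X, β, hXβ, hXL⟩ := (h₁f _).mp hYγ
      refine ⟨X, γ, ?_, ?_⟩
      · simp only [Prod.mk.injEq] at hXβ
        rw [hq, hXβ.1]; rfl
      · obtain ⟨h1, h2⟩ := Prod.mk.injEq .. ▸ hXβ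
        show (X, J₁.dualMap ((J₂.dualMap) γ)) ∈ L
        rw [h2]
        exact hXL
    · rintro ⟨X, β, rfl, hXL⟩
      have h1 : (J₁ X, J₂.dualMap β) ∈ LW := (h₁f _).mpr ⟨X, J₂.dualMap β, rfl, hXL⟩
      exact (h₂f _).mpr ⟨J₁ X, β, rfl, h1⟩
  · intro X hX h0
    have h1 : (J₁ X, (0 : Module.Dual ℝ W)) ∈ LW := by
      refine (h₁f _).mpr ⟨X, 0, rfl, ?_⟩
      simpa using h0
    have h2 : J₁ X = 0 := h₂k _ hX h1
    exact h₁k _ h2 h0
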